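/- For any nonnegative measurable function g: ℝ_{≥0} → ℝ_{≥0} such that the integrals exist, the function ψ_g(μ) = ∫_{ℝ^n} e^{-y^T Σ(μ) y} g(y^T y) dy is a positive definite semigroup function on probability measures: Σ_{i,j} c_i c_j ψ_g(μ_i + μ_j) ≥ 0 for all finite families, provided Σ(μ_i + μ_j) is positive definite for all pairs. -/

import Mathlib

open Finset Matrix MeasureTheory

noncomputable def meanVec {n : ℕ} (μ : (Fin n → ℝ) →₀ ℝ) : Fin n → ℝ :=
  fun i => ∑ p ∈ μ.support, μ p * p i

noncomputable def varMat {n : ℕ} (μ : (Fin n → ℝ) →₀ ℝ) : Matrix (Fin n) (Fin n) ℝ :=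
  Matrix.of fun i j =>
    (∑ p ∈ μ.support, μ p * p i * p j) - meanVec μ i * meanVec μ j

/-- ψ_g(μ) = ∫ e^{-yᵀ Σ(μ) y} g(yᵀy) dy. -/
noncomputable def psiG {n : ℕ} (g : ℝ → ℝ) (μ : (Fin n → ℝ) →₀ ℝ) : ℝ :=
  ∫ y : Fin n → ℝ, Real.exp (-(y ⬝ᵥ (varMat μ).mulVec y)) * g (y ⬝ᵥ y)

/-!
Since `Σ(μ + ν) = Σ(μ) + Σ(ν) - (m_μ m_νᵀ + m_ν m_μᵀ)` with `m` the mean vector, for fixed `y` the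
integrand of `ψ_g(μᵢ + μⱼ)` factors as `eᵢ eⱼ exp (2 bᵢ bⱼ) g(yᵀy)` with `eᵢ = exp (-yᵀΣ(μᵢ)y)` and
`bᵢ = m_{μᵢ} ⬝ y`. The kernel `exp (2 bᵢ bⱼ)` is positive semidefinite, being a power series with
nonnegative coefficients in the rank-one kernel `bᵢ bⱼ`; multiplying by `g(yᵀy) ≥ 0` and integrating
in `y` keeps the quadratic form nonnegative.
-/

lemma sum_sum_mul_mul_exp_mul_nonneg {ι : Type*} [Fintype ι] (e x : ι → ℝ) {t : ℝ}
    (ht : 0 ≤ t) : 0 ≤ ∑ i, ∑ j, e i * e j * Real.exp (t * (x i * x j)) := by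
  have hseries : HasSum (fun m : ℕ => ∑ i, ∑ j, e i * e j * ((t * (x i * x j)) ^ m / m.factorial))
      (∑ i, ∑ j, e i * e j * Real.exp (t * (x i * x j))) :=
    hasSum_sum fun i _ => hasSum_sum fun j _ =>
      (Real.exp_eq_exp_ℝ ▸ NormedSpace.expSeries_div_hasSum_exp _).mul_left _
  refine hseries.nonneg fun m => ?_
  have hterm : ∑ i, ∑ j, e i * e j * ((t * (x i * x j)) ^ m / m.factorial)
      = t ^ m / m.factorial * (∑ i, e i * x i ^ m) ^ 2 := by
    rw [sq, sum_mul_sum, mul_sum]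
    refine sum_congr rfl fun i _ => ?_
    rw [mul_sum]
    exact sum_congr rfl fun j _ => by ring
  rw [hterm]
  exact mul_nonneg (div_nonneg (pow_nonneg ht m) m.factorial.cast_nonneg) (sq_nonneg _)

lemma sum_support_add_mul {α R : Type*} [Semiring R] (μ ν : α →₀ R) (f : α → R) :
    ∑ p ∈ (μ + ν).support, (μ + ν) p * f p
      = ∑ p ∈ μ.support, μ p * f p + ∑ p ∈ ν.support, ν p * f p :=
  Finsupp.sum_add_index' (h := fun p v => v * f p) (fun _ => zero_mul _)
    (fun _ _ _ => add_mul _ _ _)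

section Moments

variable {n : ℕ}

lemma meanVec_add (μ ν : (Fin n → ℝ) →₀ ℝ) : meanVec (μ + ν) = meanVec μ + meanVec ν :=
  funext fun i => sum_support_add_mul μ ν (fun p => p i)

lemma varMat_add (μ ν : (Fin n → ℝ) →₀ ℝ) :
    varMat (μ + ν) = varMat μ + varMat ν
      - (vecMulVec (meanVec μ) (meanVec ν) + vecMulVec (meanVec ν) (meanVec μ)) := by
  ext i j
  simp only [varMat, of_apply, Matrix.add_apply, Matrix.sub_apply, vecMulVec_apply, meanVec_add,
    Pi.add_apply, mul_assoc, sum_support_add_mul μ ν (fun p => p i * p j)]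
  ring

lemma dotProduct_varMat_add_mulVec (μ ν : (Fin n → ℝ) →₀ ℝ) (y : Fin n → ℝ) :
    y ⬝ᵥ varMat (μ + ν) *ᵥ y
      = y ⬝ᵥ varMat μ *ᵥ y + y ⬝ᵥ varMat ν *ᵥ y - 2 * (meanVec μ ⬝ᵥ y) * (meanVec ν ⬝ᵥ y) := by
  simp only [varMat_add, sub_mulVec, add_mulVec, vecMulVec_mulVec, op_smul_eq_smul,
    dotProduct_sub, dotProduct_add, dotProduct_smul, smul_eq_mul]
  rw [dotProduct_comm y (meanVec μ), dotProduct_comm y (meanVec ν)]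
  ring

lemma sum_sum_mul_exp_neg_varMat_add_nonneg {ι : Type*} [Fintype ι]
    (μ : ι → (Fin n → ℝ) →₀ ℝ) (c : ι → ℝ) (y : Fin n → ℝ) :
    0 ≤ ∑ i, ∑ j, c i * c j * Real.exp (-(y ⬝ᵥ varMat (μ i + μ j) *ᵥ y)) := by
  set q : ι → ℝ := fun i => y ⬝ᵥ varMat (μ i) *ᵥ y
  set b : ι → ℝ := fun i => meanVec (μ i) ⬝ᵥ y
  have hfactor : ∀ i j, c i * c j * Real.exp (-(y ⬝ᵥ varMat (μ i + μ j) *ᵥ y))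
      = (c i * Real.exp (-q i)) * (c j * Real.exp (-q j)) * Real.exp (2 * (b i * b j)) := by
    intro i j
    rw [dotProduct_varMat_add_mulVec, show -(q i + q j - 2 * b i * b j)
      = -q i + (-q j + 2 * (b i * b j)) by ring, Real.exp_add, Real.exp_add]
    ring
  simp only [hfactor]
  exact sum_sum_mul_mul_exp_mul_nonneg _ b zero_le_two

end Moments

lemma sum_sum_mul_integral_nonneg {ι α : Type*} [Fintype ι] [MeasurableSpace α] {ν : Measure α}
    (f : ι → ι → α → ℝ) (hf : ∀ i j, Integrable (f i j) ν) (c : ι → ℝ)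
    (hpt : ∀ y, 0 ≤ ∑ i, ∑ j, c i * c j * f i j y) :
    0 ≤ ∑ i, ∑ j, c i * c j * ∫ y, f i j y ∂ν := by
  have hcf : ∀ i j, Integrable (fun y => c i * c j * f i j y) ν :=
    fun i j => (hf i j).const_mul _
  calc 0 ≤ ∫ y, ∑ i, ∑ j, c i * c j * f i j y ∂ν := integral_nonneg hpt
    _ = ∑ i, ∑ j, c i * c j * ∫ y, f i j y ∂ν := by
      rw [integral_finsetSum _ fun i _ => integrable_finsetSum _ fun j _ => hcf i j]
      simp_rw [integral_finsetSum _ fun j _ => hcf _ j, integral_const_mul]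

theorem psiG_ssppd_general {n k : ℕ} (g : ℝ → ℝ)
    (hg_nonneg : ∀ x, 0 ≤ x → 0 ≤ g x)
    (μ : Fin k → ((Fin n → ℝ) →₀ ℝ))
    (hint : ∀ i j, Integrable
      (fun y : Fin n → ℝ =>
        Real.exp (-(y ⬝ᵥ (varMat (μ i + μ j)).mulVec y)) * g (y ⬝ᵥ y)))
    (c : Fin k → ℝ) :
    0 ≤ ∑ i, ∑ j, c i * c j * psiG g (μ i + μ j) := by
  refine sum_sum_mul_integral_nonneg _ hint c fun y => ?_
  have hg : 0 ≤ g (y ⬝ᵥ y) := hg_nonneg _ (Fintype.sum_nonneg fun i => mul_self_nonneg (y i))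
  simpa only [← mul_assoc, ← sum_mul] using
    mul_nonneg (sum_sum_mul_exp_neg_varMat_add_nonneg μ c y) hg

/-- ψ_g is a positive definite semigroup function on probability measures. -/
theorem psiG_ssppd {n k : ℕ} (g : ℝ → ℝ) (hg_meas : Measurable g)
    (hg_nonneg : ∀ x, 0 ≤ x → 0 ≤ g x)
    (μ : Fin k → ((Fin n → ℝ) →₀ ℝ))
    (hpos : ∀ i p, 0 ≤ μ i p) (hprob : ∀ i, ∑ p ∈ (μ i).support, μ i p = 1)
    (hpd : ∀ i j, (varMat (μ i + μ j)).PosDef)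
    (hint : ∀ i j, Integrable
      (fun y : Fin n → ℝ =>
        Real.exp (-(y ⬝ᵥ (varMat (μ i + μ j)).mulVec y)) * g (y ⬝ᵥ y)))
    (c : Fin k → ℝ) :
    0 ≤ ∑ i, ∑ j, c i * c j * psiG g (μ i + μ j) :=
  psiG_ssppd_general g hg_nonneg μ hint c
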